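/- arXiv:1406.6168 — 4 statements merged into one kernel-verified Lean document; each statement's English description precedes it below -/
import Mathlib

section
/- For the complete bipartite graph $K_{n,m}$ with $n \geq m \geq 1$, the total fibonaccian irregularity equals $nm(f_n - f_m)$, where $f_k$ is the $k$-th Fibonacci number. -/
open SimpleGraph Finset

attribute [local instance] Classical.propDecidable

namespace SimpleGraph

variable {α β : Type*} [Fintype α] [Fintype β]

theorem neighborFinset_completeBipartiteGraph_inl (a : α) :
    (completeBipartiteGraph α β).neighborFinset (Sum.inl a) = univ.map .inr := by
  ext (_ | _) <;> simp

theorem neighborFinset_completeBipartiteGraph_inr (b : β) :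
    (completeBipartiteGraph α β).neighborFinset (Sum.inr b) = univ.map .inl := by
  ext (_ | _) <;> simp

theorem degree_completeBipartiteGraph_inl (a : α) :
    (completeBipartiteGraph α β).degree (Sum.inl a) = Fintype.card β := by
  rw [← card_neighborFinset_eq_degree, neighborFinset_completeBipartiteGraph_inl, card_map,
    card_univ]

theorem degree_completeBipartiteGraph_inr (b : β) :
    (completeBipartiteGraph α β).degree (Sum.inr b) = Fintype.card α := by
  rw [← card_neighborFinset_eq_degree, neighborFinset_completeBipartiteGraph_inr, card_map,
    card_univ]

end SimpleGraph

theorem Fintype.sum_sum_abs_sub_sumElim_const {α β R : Type*} [Fintype α] [Fintype β]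
    [CommRing R] [LinearOrder R] [IsOrderedRing R] (a b : R) :
    ∑ u : α ⊕ β, ∑ v : α ⊕ β,
        |Sum.elim (fun _ ↦ a) (fun _ ↦ b) u - Sum.elim (fun _ ↦ a) (fun _ ↦ b) v| =
      2 * (Fintype.card α * Fintype.card β * |a - b|) := by
  simp only [Fintype.sum_sum_type, Sum.elim_inl, Sum.elim_inr, sub_self, abs_zero,
    sum_const, card_univ, nsmul_eq_mul, abs_sub_comm b a]
  ring

theorem firr_completeBipartite_general (n m : ℕ) (hnm : m ≤ n) :
    ∑ u : Fin n ⊕ Fin m, ∑ v : Fin n ⊕ Fin m,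
        |(Nat.fib ((completeBipartiteGraph (Fin n) (Fin m)).degree u) : ℤ) -
          (Nat.fib ((completeBipartiteGraph (Fin n) (Fin m)).degree v) : ℤ)| =
      2 * ((n : ℤ) * (m : ℤ) * ((Nat.fib n : ℤ) - (Nat.fib m : ℤ))) := by
  have hdeg : (fun u ↦ (Nat.fib ((completeBipartiteGraph (Fin n) (Fin m)).degree u) : ℤ)) =
      Sum.elim (fun _ ↦ (Nat.fib m : ℤ)) (fun _ ↦ (Nat.fib n : ℤ)) := by
    ext (a | b)
    · simp [degree_completeBipartiteGraph_inl]
    · simp [degree_completeBipartiteGraph_inr]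
  have hfib : (Nat.fib m : ℤ) ≤ Nat.fib n := mod_cast Nat.fib_mono hnm
  simp only [congrFun hdeg]
  rw [Fintype.sum_sum_abs_sub_sumElim_const, Fintype.card_fin, Fintype.card_fin, abs_sub_comm,
    abs_of_nonneg (sub_nonneg.mpr hfib)]

/-- For the complete bipartite graph `K_{n,m}` with `n ≥ m ≥ 1`, the total fibonaccian
irregularity (sum over unordered pairs of `|f_{d(u)} - f_{d(v)}|`, expressed as half of the
double sum) equals `n * m * (fib n - fib m)`. -/
theorem firr_completeBipartite (n m : ℕ) (hm : 1 ≤ m) (hnm : m ≤ n) :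
    ∑ u : Fin n ⊕ Fin m, ∑ v : Fin n ⊕ Fin m,
        |(Nat.fib ((completeBipartiteGraph (Fin n) (Fin m)).degree u) : ℤ) -
          (Nat.fib ((completeBipartiteGraph (Fin n) (Fin m)).degree v) : ℤ)| =
      2 * ((n : ℤ) * (m : ℤ) * ((Nat.fib n : ℤ) - (Nat.fib m : ℤ))) :=
  firr_completeBipartite_general n m hnm
end

section
/- For any simple graph $G$, the total irregularity of the disjoint union of $G$ with a copy of itself equals four times the total irregularity of $G$: $irr_t(G \cup G) = 4 \cdot irr_t(G)$. -/
open SimpleGraph Finset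

attribute [local instance] Classical.propDecidable

namespace SimpleGraph

variable {V W : Type*} (G : SimpleGraph V) (H : SimpleGraph W)

theorem degree_sum_inl (v : V) [Fintype (G.neighborSet v)]
    [Fintype ((G ⊕g H).neighborSet (.inl v))] : (G ⊕g H).degree (.inl v) = G.degree v := by
  simp only [← card_neighborSet_eq_degree]
  exact Fintype.card_congr <| (Equiv.setCongr (neighborSet_sum_inl (G := G) (H := H) v)).trans
    (Equiv.Set.image _ _ Sum.inl_injective).symm

theorem degree_sum_inr (w : W) [Fintype (H.neighborSet w)]
    [Fintype ((G ⊕g H).neighborSet (.inr w))] : (G ⊕g H).degree (.inr w) = H.degree w := by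
  simp only [← card_neighborSet_eq_degree]
  exact Fintype.card_congr <| (Equiv.setCongr (neighborSet_sum_inr (G := G) (H := H) w)).trans
    (Equiv.Set.image _ _ Sum.inr_injective).symm

end SimpleGraph

/-- Both sides run over ordered pairs, so each double sum is twice the total irregularity. -/
theorem irr_disjUnion_self {α : Type*} [Fintype α] (G : SimpleGraph α) :
    ∑ u : α ⊕ α, ∑ v : α ⊕ α, |((G ⊕g G).degree u : ℤ) - ((G ⊕g G).degree v : ℤ)| =
      4 * ∑ u : α, ∑ v : α, |(G.degree u : ℤ) - (G.degree v : ℤ)| := by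
  simp only [Fintype.sum_sum_type, degree_sum_inl, degree_sum_inr, sum_add_distrib]
  ring
end

section
/- For the path $P_n$ with $n \geq 2$, the total $\pm$-fibonaccian irregularity satisfies $firr_t^{\pm}(P_n) = 4(n-2)$, where the $\pm$-Fibonacci weight of a vertex $v$ is $-f_{d(v)}$ if $d(v)$ is odd and $f_{d(v)}$ if $d(v)$ is even. -/
/-!
Both endpoints of `P_n` have weight `-f₁ = -1` and the `n - 2` interior vertices have weight
`f₂ = 1`. For `±1`-valued weights `|w u - w v| = 1 - w u * w v`, so the double sum equals
`n² - (∑ w)² = n² - (n - 4)² = 2 · 4(n - 2)`.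
-/

open SimpleGraph Finset

attribute [local instance] Classical.propDecidable

def pmFib (d : ℕ) : ℤ := if Odd d then -(Nat.fib d : ℤ) else Nat.fib d

lemma abs_sub_eq_one_sub_mul {a b : ℤ} (ha : a = 1 ∨ a = -1) (hb : b = 1 ∨ b = -1) :
    |a - b| = 1 - a * b := by
  rcases ha with rfl | rfl <;> rcases hb with rfl | rfl <;> norm_num

lemma sum_sum_abs_sub_of_pm_one {ι : Type*} [Fintype ι] (w : ι → ℤ)
    (hw : ∀ i, w i = 1 ∨ w i = -1) :
    ∑ i, ∑ j, |w i - w j| = (Fintype.card ι : ℤ) ^ 2 - (∑ i, w i) ^ 2 := by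
  simp only [abs_sub_eq_one_sub_mul (hw _) (hw _), sum_sub_distrib, ← sum_mul_sum, sum_const,
    card_univ, nsmul_eq_mul, mul_one, sq]

lemma sum_ite_neg_one_one {ι : Type*} [Fintype ι] (p : ι → Prop) [DecidablePred p] :
    ∑ i, (if p i then -1 else 1 : ℤ) = Fintype.card ι - 2 * #{i | p i} := by
  have hcard := card_filter_add_card_filter_not (s := univ) p
  rw [card_univ] at hcard
  rw [sum_ite, sum_const, sum_const, ← hcard]
  simp only [smul_neg, nsmul_eq_mul, mul_one]
  push_cast
  ring

section pathGraph

variable {n : ℕ}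

lemma pathGraph_degree_of_endpoint (hn : 2 ≤ n) {u : Fin n}
    (hu : u.val = 0 ∨ u.val = n - 1) : (pathGraph n).degree u = 1 := by
  rw [← card_neighborFinset_eq_degree, card_eq_one]
  rcases hu with hu | hu
  · refine ⟨⟨1, by omega⟩, ?_⟩
    ext v
    simp only [mem_neighborFinset, pathGraph_adj, mem_singleton, Fin.ext_iff]
    omega
  · refine ⟨⟨n - 2, by omega⟩, ?_⟩
    ext v
    have := v.isLt
    simp only [mem_neighborFinset, pathGraph_adj, mem_singleton, Fin.ext_iff]
    omega

lemma pathGraph_degree_of_not_endpoint {u : Fin n} (hu : ¬(u.val = 0 ∨ u.val = n - 1)) :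
    (pathGraph n).degree u = 2 := by
  have := u.isLt
  rw [← card_neighborFinset_eq_degree, card_eq_two]
  refine ⟨⟨u - 1, by omega⟩, ⟨u + 1, by omega⟩, by simp only [ne_eq, Fin.ext_iff]; omega, ?_⟩
  ext v
  simp only [mem_neighborFinset, pathGraph_adj, mem_insert, mem_singleton, Fin.ext_iff]
  omega

lemma pmFib_pathGraph_degree (hn : 2 ≤ n) (u : Fin n) :
    pmFib ((pathGraph n).degree u) = if u.val = 0 ∨ u.val = n - 1 then -1 else 1 := by
  split_ifs with hu
  · rw [pathGraph_degree_of_endpoint hn hu]; rfl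
  · rw [pathGraph_degree_of_not_endpoint hu]; rfl

lemma card_endpoints (hn : 2 ≤ n) : #{u : Fin n | u.val = 0 ∨ u.val = n - 1} = 2 := by
  rw [card_eq_two]
  refine ⟨⟨0, by omega⟩, ⟨n - 1, by omega⟩, by simp only [ne_eq, Fin.ext_iff]; omega, ?_⟩
  ext u
  simp only [mem_filter, mem_univ, true_and, mem_insert, mem_singleton, Fin.ext_iff]

end pathGraph

/-- For the path `P_n` with `n ≥ 2`, the total `±`-fibonaccian irregularity equals `4(n-2)`,
where the `±`-Fibonacci weight of a vertex `v` is `-f_{d(v)}` if `d(v)` is odd and `f_{d(v)}`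
if `d(v)` is even (the irregularity is the sum over unordered pairs of the absolute
differences of the weights, expressed here as half of the double sum). -/
theorem pmfirr_path (n : ℕ) (hn : 2 ≤ n) :
    ∑ u : Fin n, ∑ v : Fin n,
        |(if Odd ((pathGraph n).degree u) then -(Nat.fib ((pathGraph n).degree u) : ℤ)
            else (Nat.fib ((pathGraph n).degree u) : ℤ)) -
          (if Odd ((pathGraph n).degree v) then -(Nat.fib ((pathGraph n).degree v) : ℤ)
            else (Nat.fib ((pathGraph n).degree v) : ℤ))| =
      2 * (4 * ((n : ℤ) - 2)) := by
  change ∑ u : Fin n, ∑ v : Fin n,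
    |pmFib ((pathGraph n).degree u) - pmFib ((pathGraph n).degree v)| = _
  have hsign (u : Fin n) :
      pmFib ((pathGraph n).degree u) = 1 ∨ pmFib ((pathGraph n).degree u) = -1 := by
    rw [pmFib_pathGraph_degree hn]
    split_ifs <;> simp
  rw [sum_sum_abs_sub_of_pm_one _ hsign]
  simp only [pmFib_pathGraph_degree hn, sum_ite_neg_one_one, card_endpoints hn, Fintype.card_fin]
  ring
end

section
/- Let $G$ be a simple graph and let $G'$ be obtained from $G$ by adding a new vertex $w$ adjacent to a set $S$ of existing vertices. Then $irr_t(G') = irr_t(G) + \ell_1 - \ell_2 + \sum_{v \in V(G)} |{|S|} - d_{G'}(v)|$, where $\ell_1$ is the number of pairs $(u, s)$ with $u \in V(G) \setminus S$, $s \in S$, and $d_G(u) \leq d_G(s)$, and $\ell_2$ is the number of pairs $(u, s)$ with $u \in V(G) \setminus S$, $s \in S$, and $d_G(u) > d_G(s)$, provided additionally that all vertices in $S$ have equal degree changes handled pairwise (each $s \in S$ gains exactly one in degree) and all pairs within $S$ keep their differences unchanged. -/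
open SimpleGraph Finset

attribute [local instance] Classical.propDecidable

/-- The graph obtained from `G` by adding a new vertex (`none`) adjacent to every vertex of
the set `S` of existing vertices. -/
def SimpleGraph.addVertex {V : Type*} (G : SimpleGraph V) (S : Finset V) :
    SimpleGraph (Option V) where
  Adj x y := match x, y with
    | some a, some b => G.Adj a b
    | none, some b => b ∈ S
    | some a, none => a ∈ S
    | none, none => False
  symm := by
    constructor
    intro x y h
    cases x <;> cases y <;> simp_all [SimpleGraph.adj_comm]
  loopless := by
    constructor
    intro x h
    cases x <;> simp_all

/-! For two old vertices only the pairs `u ∉ S`, `s ∈ S` change: raising `d(s)` by one moves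
`|d(u) - d(s)|` up by one if `d(u) ≤ d(s)` and down by one otherwise, which gives `ℓ₁ - ℓ₂`.
The pairs through the new vertex contribute `||S| - d'(v)|`, as `d'(w) = |S|`. -/

namespace SimpleGraph

variable {V : Type*}

theorem degree_eq_sum_ite [Fintype V] (H : SimpleGraph V) [DecidableRel H.Adj] (x : V) :
    H.degree x = ∑ y, if H.Adj x y then 1 else 0 := by
  rw [← card_neighborFinset_eq_degree, neighborFinset_eq_filter, card_filter]

variable (G : SimpleGraph V) (S : Finset V)

@[simp]
theorem addVertex_adj_some_some {u v : V} : (G.addVertex S).Adj (some u) (some v) ↔ G.Adj u v :=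
  Iff.rfl

@[simp]
theorem addVertex_adj_none_some {v : V} : (G.addVertex S).Adj none (some v) ↔ v ∈ S :=
  Iff.rfl

@[simp]
theorem addVertex_adj_some_none {v : V} : (G.addVertex S).Adj (some v) none ↔ v ∈ S :=
  Iff.rfl

theorem addVertex_neighborFinset_none [Fintype V] :
    (G.addVertex S).neighborFinset none = S.map .some := by
  ext x
  cases x <;> simp

theorem addVertex_degree_none [Fintype V] : (G.addVertex S).degree none = #S := by
  rw [← card_neighborFinset_eq_degree, addVertex_neighborFinset_none, card_map]

theorem addVertex_degree_some [Fintype V] (v : V) :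
    (G.addVertex S).degree (some v) = G.degree v + if v ∈ S then 1 else 0 := by
  rw [degree_eq_sum_ite, Fintype.sum_option, degree_eq_sum_ite, add_comm]
  simp only [addVertex_adj_some_some, addVertex_adj_some_none]

end SimpleGraph

theorem abs_add_ite_sub_add_ite (a b : ℤ) (p q : Prop) [Decidable p] [Decidable q] :
    |(a + if p then 1 else 0) - (b + if q then 1 else 0)| =
      |a - b| + (if ¬p ∧ q then (if a ≤ b then 1 else -1) else 0) +
        (if p ∧ ¬q then (if b ≤ a then 1 else -1) else 0) := by
  split_ifs <;> grind

theorem Finset.sum_ite_one_neg_one {ι : Type*} (s : Finset ι) (P : ι → Prop) [DecidablePred P] :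
    ∑ i ∈ s, (if P i then 1 else -1 : ℤ) = #(s.filter P) - #(s.filter (¬ P ·)) := by
  simp [sum_ite, sub_eq_add_neg]

section

variable {V : Type*} [Fintype V] [DecidableEq V] (S : Finset V)

theorem Finset.sum_sum_ite_notMem_and_mem {M : Type*} [AddCommMonoid M] (g : V → V → M) :
    ∑ u, ∑ v, (if u ∉ S ∧ v ∈ S then g u v else 0) = ∑ p ∈ (univ \ S) ×ˢ S, g p.1 p.2 := by
  rw [sum_product, sdiff_eq_filter, sum_filter]
  refine sum_congr rfl fun u _ => ?_
  by_cases hu : u ∈ S <;> simp [hu]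

theorem sum_sum_abs_add_ite_sub_add_ite (f : V → ℤ) :
    ∑ u, ∑ v, |(f u + if u ∈ S then 1 else 0) - (f v + if v ∈ S then 1 else 0)| =
      ∑ u, ∑ v, |f u - f v| + 2 * ∑ p ∈ (univ \ S) ×ˢ S, if f p.1 ≤ f p.2 then 1 else -1 := by
  simp only [abs_add_ite_sub_add_ite, sum_add_distrib]
  rw [sum_comm (f := fun u v => if u ∈ S ∧ v ∉ S then _ else _)]
  simp only [and_comm (a := _ ∈ S), sum_sum_ite_notMem_and_mem]
  ring

end

theorem SimpleGraph.sum_sum_abs_addVertex_degree_sub {V : Type*} [Fintype V] (G : SimpleGraph V)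
    (S : Finset V) :
    ∑ u, ∑ v, |((G.addVertex S).degree (some u) : ℤ) - (G.addVertex S).degree (some v)| =
      ∑ u, ∑ v, |(G.degree u : ℤ) - G.degree v| +
        2 * ((#(((univ \ S) ×ˢ S).filter fun p => G.degree p.1 ≤ G.degree p.2) : ℤ) -
          #(((univ \ S) ×ˢ S).filter fun p => G.degree p.2 < G.degree p.1)) := by
  have hdeg (v : V) :
      ((G.addVertex S).degree (some v) : ℤ) = G.degree v + if v ∈ S then 1 else 0 := by
    simp [addVertex_degree_some]
  simp only [hdeg, sum_sum_abs_add_ite_sub_add_ite, sum_ite_one_neg_one, Nat.cast_le, not_le]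

/-- Both total irregularities appear doubled, as sums over ordered pairs. -/
theorem irr_addVertex {V : Type*} [Fintype V] (G : SimpleGraph V) (S : Finset V) :
    ∑ x : Option V, ∑ y : Option V,
        |((G.addVertex S).degree x : ℤ) - ((G.addVertex S).degree y : ℤ)| =
      (∑ u : V, ∑ v : V, |(G.degree u : ℤ) - (G.degree v : ℤ)|) +
        2 * (((((univ \ S) ×ˢ S).filter
                (fun p : V × V => G.degree p.1 ≤ G.degree p.2)).card : ℤ) -
              ((((univ \ S) ×ˢ S).filter
                (fun p : V × V => G.degree p.1 > G.degree p.2)).card : ℤ) +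
              ∑ v : V, |((S.card : ℤ)) - ((G.addVertex S).degree (some v) : ℤ)|) := by
  simp only [Fintype.sum_option, addVertex_degree_none, sub_self, abs_zero, zero_add,
    sum_add_distrib, abs_sub_comm _ (#S : ℤ), gt_iff_lt, sum_sum_abs_addVertex_degree_sub]
  ring
end
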